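/- arXiv:2005.03497 — 3 statements merged into one kernel-verified Lean document; each statement's English description precedes it below -/
import Mathlib

section
/- Let α ∈ K and let S_α := Σ_{g ∈ G} g(α)·g be the orbit sum of α in the group algebra K[G]. Then α is a normal element of K/F if and only if S_α is a unit in K[G]. -/
/-!
Write `G = Gal(K/F)` and `M = (σ (g⁻¹ α))_{σ, g}`. Left multiplication by `S_α` on `K[G]` has
matrix `(S_α (σ g⁻¹))_{σ, g} = M` in the basis `G`, so `S_α` is a unit iff `det M ≠ 0`. On the
other hand, `det M ≠ 0` iff the orbit of `α` is `F`-linearly independent: an `F`-linear relation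
among the `g⁻¹ α` becomes, after applying each `σ`, one among the columns of `M`, and a `K`-linear
relation `∑ w σ • σ` among the rows vanishes on a basis of `K`, which Dedekind's independence of
characters excludes.
-/

open Matrix

namespace MonoidAlgebra

theorem coeff_sum_single_apply {R M : Type*} [Semiring R] [Fintype M] (f : M → R) (m : M) :
    (∑ n, single n (f n)).coeff m = f m := by
  classical
  simp [coeff_sum, Finsupp.finsetSum_apply, coeff_single, Finsupp.single_apply]

variable {R G : Type*} [CommRing R] [Group G] [Fintype G] [DecidableEq G]

theorem toMatrixAlgEquiv_lmul (x : MonoidAlgebra R G) :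
    LinearMap.toMatrixAlgEquiv (basis G R) (Algebra.lmul R _ x) =
      Matrix.of fun i j => x.coeff (i * j⁻¹) := by
  ext i j
  simp [LinearMap.toMatrixAlgEquiv_apply, basis]

theorem isUnit_iff_isUnit_det (x : MonoidAlgebra R G) :
    IsUnit x ↔ IsUnit (Matrix.of fun i j => x.coeff (i * j⁻¹)).det := by
  rw [← Matrix.isUnit_iff_isUnit_det, ← toMatrixAlgEquiv_lmul, MulEquiv.isUnit_map,
    Algebra.lmul_isUnit_iff]

end MonoidAlgebra

theorem exists_basis_eq_iff_linearIndependent {ι F V : Type*} [Fintype ι] [Field F]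
    [AddCommGroup V] [Module F V] [FiniteDimensional F V] {v : ι → V}
    (hcard : Fintype.card ι = Module.finrank F V) :
    (∃ b : Module.Basis ι F V, ∀ i, b i = v i) ↔ LinearIndependent F v := by
  constructor
  · rintro ⟨b, hb⟩
    exact funext hb ▸ b.linearIndependent
  · intro hv
    exact ⟨basisOfLinearIndependentOfCardEqFinrank' v hv hcard, fun i => by
      rw [coe_basisOfLinearIndependentOfCardEqFinrank']⟩

section Galois

variable {F K : Type*} [Field F] [Field K] [Algebra F K] [Fintype (K ≃ₐ[F] K)]

theorem IsGalois.fintype_card_aut_eq_finrank [FiniteDimensional F K] [IsGalois F K] :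
    Fintype.card (K ≃ₐ[F] K) = Module.finrank F K :=
  Fintype.card_eq_nat_card.trans (IsGalois.card_aut_eq_finrank F K)

variable [DecidableEq (K ≃ₐ[F] K)]

theorem linearIndependent_of_det_algEquiv_apply_ne_zero {v : (K ≃ₐ[F] K) → K}
    (hv : (of fun σ g : K ≃ₐ[F] K => σ (v g)).det ≠ 0) : LinearIndependent F v := by
  refine Fintype.linearIndependent_iff.mpr fun c hc g => ?_
  have hmulVec : (of fun σ g : K ≃ₐ[F] K => σ (v g)) *ᵥ (algebraMap F K ∘ c) = 0 := by
    funext σ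
    simpa [mulVec, dotProduct, Algebra.smul_def, mul_comm] using congr_arg σ hc
  exact (algebraMap F K).injective <| by
    simpa using congr_fun (eq_zero_of_mulVec_eq_zero hv hmulVec) g

theorem det_algEquiv_apply_ne_zero [FiniteDimensional F K] [IsGalois F K]
    {v : (K ≃ₐ[F] K) → K} (hv : LinearIndependent F v) :
    (of fun σ g : K ≃ₐ[F] K => σ (v g)).det ≠ 0 := by
  intro hdet
  obtain ⟨w, hw0, hw⟩ := exists_vecMul_eq_zero_iff.mpr hdet
  let b := basisOfLinearIndependentOfCardEqFinrank' v hv IsGalois.fintype_card_aut_eq_finrank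
  have hsum : ∑ σ : K ≃ₐ[F] K, w σ • σ.toLinearMap = 0 :=
    b.ext fun g => by simpa [b, vecMul, dotProduct] using congr_fun hw g
  exact hw0 <| funext <| Fintype.linearIndependent_iff.mp
    ((linearIndependent_algHom_toLinearMap F K K).comp _ AlgEquiv.coe_toAlgHom_injective) w hsum

theorem linearIndependent_iff_det_algEquiv_apply_ne_zero [FiniteDimensional F K] [IsGalois F K]
    {v : (K ≃ₐ[F] K) → K} :
    LinearIndependent F v ↔ (of fun σ g : K ≃ₐ[F] K => σ (v g)).det ≠ 0 :=
  ⟨det_algEquiv_apply_ne_zero, linearIndependent_of_det_algEquiv_apply_ne_zero⟩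

end Galois

theorem normal_iff_orbitSum_isUnit_general
    (F K : Type*) [Field F] [Field K] [Algebra F K]
    [FiniteDimensional F K] [IsGalois F K]
    [Fintype (K ≃ₐ[F] K)] (α : K) :
    (∃ b : Module.Basis (K ≃ₐ[F] K) F K, ∀ g : K ≃ₐ[F] K, b g = g α) ↔
      IsUnit (∑ g : K ≃ₐ[F] K, MonoidAlgebra.single g (g α)) := by
  classical
  have hmatrix : (of fun σ g : K ≃ₐ[F] K => σ (g⁻¹ α)) =
      of fun σ g => (∑ h : K ≃ₐ[F] K, MonoidAlgebra.single h (h α)).coeff (σ * g⁻¹) := by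
    ext σ g
    rw [of_apply, of_apply, MonoidAlgebra.coeff_sum_single_apply, AlgEquiv.mul_apply]
  rw [exists_basis_eq_iff_linearIndependent IsGalois.fintype_card_aut_eq_finrank,
    ← linearIndependent_equiv (Equiv.inv (K ≃ₐ[F] K)),
    linearIndependent_iff_det_algEquiv_apply_ne_zero, MonoidAlgebra.isUnit_iff_isUnit_det,
    isUnit_iff_ne_zero, ← hmatrix]
  simp only [Function.comp_apply, Equiv.inv_apply]

/-- α is a normal element of K/F iff the orbit sum
S_α = Σ_{g ∈ G} g(α)·g is a unit in the group algebra K[G]. -/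
theorem normal_iff_orbitSum_isUnit
    (F K : Type*) [Field F] [Field K] [CharZero F] [Algebra F K]
    [FiniteDimensional F K] [IsGalois F K]
    [Fintype (K ≃ₐ[F] K)] (α : K) :
    (∃ b : Module.Basis (K ≃ₐ[F] K) F K, ∀ g : K ≃ₐ[F] K, b g = g α) ↔
      IsUnit (∑ g : K ≃ₐ[F] K, MonoidAlgebra.single g (g α)) :=
  normal_iff_orbitSum_isUnit_general F K α
end

section
/- Let α ∈ K be a normal element, let b_0, …, b_{n-1} be an F-basis of K, and let X be a finite subset of F. Then the number of tuples (x_0, …, x_{n-1}) ∈ X^n such that the F-linear form ℓ : K → F determined by ℓ(b_k) = x_k for all k makes s_{α,ℓ} := Σ_{g ∈ G} ℓ(g(α))·g a non-unit in F[G] is at most n·|X|^{n-1}. -/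
/-!
Left multiplication by `s` on `F[G]` is invertible iff `s` is a unit, so `s_{α,ℓ}` fails to be a
unit exactly when the determinant of this multiplication map vanishes. In the coordinates `x` of
`ℓ` that determinant is a polynomial of total degree at most `|G| = n`, and it is nonzero: for the
coordinate form of the basis `(g α)` at `g = 1` one gets `s_{α,ℓ} = 1`. Schwartz–Zippel bounds
its zeros in `Xⁿ` by `n |X|^(n-1)`.
-/

open MvPolynomial Finset

theorem Matrix.totalDegree_det_le {ι σ R : Type*} [Fintype ι] [DecidableEq ι] [CommRing R]
    (M : Matrix ι ι (MvPolynomial σ R)) {d : ℕ} (h : ∀ i j, (M i j).totalDegree ≤ d) :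
    M.det.totalDegree ≤ Fintype.card ι * d := by
  rw [Matrix.det_apply]
  refine totalDegree_finsetSum_le fun g _ => (totalDegree_smul_le _ _).trans ?_
  refine (totalDegree_finsetProd _ _).trans ?_
  simpa using Finset.sum_le_sum fun i (_ : i ∈ univ) => h (g i) i

namespace LinearMap

variable {F σ ι : Type*} [Field F] [Fintype σ] [DecidableEq σ] [Fintype ι] [DecidableEq ι]

noncomputable def detMvPolynomial (M : (σ → F) →ₗ[F] Matrix ι ι F) : MvPolynomial σ F :=
  (Matrix.of fun i j => ∑ k, C (M (Pi.single k 1) i j) * X k).det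

theorem eval_detMvPolynomial (M : (σ → F) →ₗ[F] Matrix ι ι F) (x : σ → F) :
    eval x M.detMvPolynomial = (M x).det := by
  have hsingle (k : σ) : (fun j => if k = j then (1 : F) else 0) = Pi.single k 1 :=
    funext fun j => by simp [Pi.single_apply, eq_comm]
  rw [detMvPolynomial, RingHom.map_det, M.pi_apply_eq_sum_univ x]
  congr 1
  ext i j
  simp [Matrix.sum_apply, mul_comm, hsingle]

theorem totalDegree_detMvPolynomial_le (M : (σ → F) →ₗ[F] Matrix ι ι F) :
    M.detMvPolynomial.totalDegree ≤ Fintype.card ι := by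
  refine (Matrix.totalDegree_det_le _ fun i j => ?_).trans_eq (mul_one _)
  refine totalDegree_finsetSum_le fun k _ => (totalDegree_mul _ _).trans ?_
  simp [totalDegree_C, totalDegree_X]

end LinearMap

theorem MvPolynomial.card_filter_piFinset_eval_eq_zero_le {R : Type*} [CommRing R] [IsDomain R]
    [DecidableEq R] {n : ℕ} (hn : 0 < n) {p : MvPolynomial (Fin n) R} (hp : p ≠ 0) (S : Finset R) :
    #{x ∈ Fintype.piFinset fun _ ↦ S | eval x p = 0} ≤ p.totalDegree * #S ^ (n - 1) := by
  obtain rfl | hS := S.eq_empty_or_nonempty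
  · have : Nonempty (Fin n) := ⟨⟨0, hn⟩⟩
    simp
  have hS : (0 : ℚ≥0) < #S := by exact_mod_cast hS.card_pos
  have hsz := schwartz_zippel_totalDegree hp S
  rw [div_le_div_iff₀ (pow_pos hS n) hS] at hsz
  have : (#S : ℚ≥0) ^ n = #S ^ (n - 1) * #S := by rw [← pow_succ, Nat.sub_add_cancel hn]
  rw [this, ← mul_assoc, mul_le_mul_iff_left₀ hS] at hsz
  exact_mod_cast hsz

theorem Algebra.isUnit_iff_det_leftMulMatrix_ne_zero {F A ι : Type*} [Field F] [Ring A]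
    [Algebra F A] [Fintype ι] [DecidableEq ι] (β : Module.Basis ι F A) (s : A) :
    IsUnit s ↔ (Algebra.leftMulMatrix β s).det ≠ 0 := by
  have := Module.Finite.of_basis β
  rw [← Algebra.lmul_isUnit_iff (R := F), LinearMap.isUnit_iff_isUnit_det,
    ← LinearMap.det_toMatrix β, isUnit_iff_ne_zero, Algebra.leftMulMatrix_apply]

section OrbitSum

variable {F K : Type*} [Field F] [Field K] [Algebra F K] [Fintype (K ≃ₐ[F] K)]

/-- The paper's `s_{α,ℓ}`, as a linear map in `ℓ`. -/
noncomputable def projectedOrbitSum (α : K) : (K →ₗ[F] F) →ₗ[F] MonoidAlgebra F (K ≃ₐ[F] K) :=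
  ∑ g, (MonoidAlgebra.lsingle g).comp (LinearMap.applyₗ (g α))

theorem projectedOrbitSum_apply (α : K) (ℓ : K →ₗ[F] F) :
    projectedOrbitSum α ℓ = ∑ g, MonoidAlgebra.single g (ℓ (g α)) := by
  simp [projectedOrbitSum, MonoidAlgebra.lsingle_apply]

theorem projectedOrbitSum_coord_one {α : K} (bb : Module.Basis (K ≃ₐ[F] K) F K)
    (hbb : ∀ g, bb g = g α) : projectedOrbitSum α (bb.coord 1) = 1 := by
  classical
  simp_rw [projectedOrbitSum_apply, ← hbb, Module.Basis.coord_apply, Module.Basis.repr_self,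
    Finsupp.single_apply]
  rw [Finset.sum_eq_single 1 (fun g _ hg => by simp [hg]) (by simp), MonoidAlgebra.one_def]
  simp

end OrbitSum

open Classical in
theorem card_bad_projections_le_general
    (F K : Type*) [Field F] [Field K] [Algebra F K]
    [Fintype (K ≃ₐ[F] K)]
    (n : ℕ) (b : Module.Basis (Fin n) F K) (α : K)
    (hα : ∃ bb : Module.Basis (K ≃ₐ[F] K) F K, ∀ g : K ≃ₐ[F] K, bb g = g α)
    (X : Finset F) :
    ((Fintype.piFinset fun _ : Fin n => X).filter fun x =>
        ¬ IsUnit (∑ g : K ≃ₐ[F] K,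
            MonoidAlgebra.single g ((b.constr F x) (g α)))).card
      ≤ n * X.card ^ (n - 1) := by
  obtain ⟨bb, hbb⟩ := hα
  have hcard : Fintype.card (K ≃ₐ[F] K) = n := by
    rw [Fintype.card_congr (bb.indexEquiv b), Fintype.card_fin]
  have hn : 0 < n := hcard ▸ Fintype.card_pos
  let M := (Algebra.leftMulMatrix (MonoidAlgebra.basis (K ≃ₐ[F] K) F)).toLinearMap ∘ₗ
    projectedOrbitSum α ∘ₗ (b.constr F).toLinearMap
  have hbad (x : Fin n → F) : ¬ IsUnit (∑ g : K ≃ₐ[F] K,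
      MonoidAlgebra.single g ((b.constr F x) (g α))) ↔ eval x M.detMvPolynomial = 0 := by
    rw [LinearMap.eval_detMvPolynomial, Algebra.isUnit_iff_det_leftMulMatrix_ne_zero
      (MonoidAlgebra.basis _ F), not_not, ← projectedOrbitSum_apply]
    rfl
  have hM : M.detMvPolynomial ≠ 0 := by
    intro h
    refine (hbad ((b.constr F).symm (bb.coord 1))).mpr (by rw [h, map_zero]) ?_
    rw [LinearEquiv.apply_symm_apply, ← projectedOrbitSum_apply,
      projectedOrbitSum_coord_one bb hbb]
    exact isUnit_one
  rw [Finset.filter_congr fun x _ => hbad x]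
  calc _ ≤ M.detMvPolynomial.totalDegree * X.card ^ (n - 1) :=
        card_filter_piFinset_eval_eq_zero_le hn hM X
    _ ≤ n * X.card ^ (n - 1) := by
        gcongr
        exact hcard ▸ M.totalDegree_detMvPolynomial_le

open Classical in
theorem card_bad_projections_le
    (F K : Type*) [Field F] [Field K] [CharZero F] [Algebra F K]
    [FiniteDimensional F K] [IsGalois F K]
    [Fintype (K ≃ₐ[F] K)]
    (n : ℕ) (b : Module.Basis (Fin n) F K) (α : K)
    (hα : ∃ bb : Module.Basis (K ≃ₐ[F] K) F K, ∀ g : K ≃ₐ[F] K, bb g = g α)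
    (X : Finset F) :
    ((Fintype.piFinset fun _ : Fin n => X).filter fun x =>
        ¬ IsUnit (∑ g : K ≃ₐ[F] K,
            MonoidAlgebra.single g ((b.constr F x) (g α)))).card
      ≤ n * X.card ^ (n - 1) :=
  card_bad_projections_le_general F K n b α hα X
end

section
/- Let F be a field of characteristic zero, p a prime, and c ≥ c' ≥ 1 integers. Let A := F[x]/⟨Φ_{p^c}(x)⟩ and B := A[y]/⟨Φ_{p^{c'}}(y)⟩. Then there is an A-algebra isomorphism θ from B to the product algebra A^{φ(p^{c'})} of φ(p^{c'}) copies of A. -/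
/-!
Write `μ` for the class of `x` in `A` and `ν = μ ^ p ^ (c - c')`. Then `ν ^ p ^ c' = 1`, and
`ν ^ k - 1` is a unit whenever `p ^ c' ∤ k`: over `ℚ` the irreducible `Φ_{p^c}` is coprime to
`X ^ (p ^ (c - c') * k) - 1`, and a Bézout relation between them, evaluated at `μ`, inverts
`ν ^ k - 1`. The identity `Φ_{p^{c'}}(Y) (Y ^ p ^ (c' - 1) - 1) = Y ^ p ^ c' - 1` then makes each
`ν ^ u`, `u` a unit mod `p ^ c'`, a root of `Φ_{p^{c'}}`, and these `φ(p ^ c')` roots have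
pairwise unit differences. So `Φ_{p^{c'}}` splits over `A` into pairwise comaximal linear
factors and the Chinese remainder theorem gives `B ≃ ∏_u A[y]/(y - ν ^ u) ≃ A ^ φ(p ^ c')`.
-/

open Polynomial

namespace Ideal

variable {R A : Type*} [CommSemiring R] [CommRing A] [Algebra R A] {ι : Type*} [Finite ι]

open scoped Function in
noncomputable def quotientInfAlgEquivPiQuotient (I : ι → Ideal A)
    (hI : Pairwise (IsCoprime on I)) : (A ⧸ ⨅ i, I i) ≃ₐ[R] ∀ i, A ⧸ I i :=
  AlgEquiv.ofRingEquiv (f := quotientInfRingEquivPiQuotient I hI) fun _ => rfl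

end Ideal

theorem isUnit_pow_sub_pow_of_not_modEq {R : Type*} [CommRing R] {ζ : R} {n : ℕ} (hn : n ≠ 0)
    (hζ : ζ ^ n = 1) (h : ∀ k, ¬ n ∣ k → IsUnit (ζ ^ k - 1)) {a b : ℕ}
    (hab : ¬ a ≡ b [MOD n]) : IsUnit (ζ ^ a - ζ ^ b) := by
  wlog hba : b ≤ a generalizing a b
  · simpa using (this (fun h' => hab h'.symm) (not_le.mp hba).le).neg
  have hfactor : ζ ^ a - ζ ^ b = ζ ^ b * (ζ ^ (a - b) - 1) := by
    rw [mul_sub, mul_one, ← pow_add, Nat.add_sub_cancel' hba]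
  rw [hfactor]
  exact ((IsUnit.of_pow_eq_one hζ hn).pow b).mul
    (h _ ((Nat.modEq_iff_dvd' hba).not.mp fun h' => hab h'.symm))

namespace Polynomial

variable {R : Type*} [CommRing R]

theorem Monic.eq_prod_X_sub_C_of_isRoot {ι : Type*} [Fintype ι] {f : R[X]} {r : ι → R}
    (hf : f.Monic) (hdeg : f.natDegree ≤ Fintype.card ι) (hroot : ∀ i, f.IsRoot (r i))
    (hr : Pairwise fun i j => IsUnit (r i - r j)) : f = ∏ i, (X - C (r i)) := by
  nontriviality R
  refine eq_of_monic_of_dvd_of_natDegree_le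
    (monic_prod_of_monic _ _ fun i _ => monic_X_sub_C (r i)) hf ?_
    (by rwa [natDegree_finsetProd_X_sub_C_eq_card, Finset.card_univ])
  exact Finset.prod_dvd_of_coprime (fun _ _ _ _ hij => isCoprime_X_sub_C_of_isUnit_sub (hr hij))
    fun i _ => dvd_iff_isRoot.mpr (hroot i)

theorem cyclotomic_rat_not_dvd_X_pow_sub_one {n k : ℕ} (hn : 0 < n) (hk : ¬ n ∣ k) :
    ¬ cyclotomic n ℚ ∣ X ^ k - 1 := by
  intro hdvd
  have hζ := Complex.isPrimitiveRoot_exp n hn.ne'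
  have hroot : (X ^ k - 1 : ℂ[X]).IsRoot (Complex.exp (2 * Real.pi * Complex.I / n)) := by
    refine (hζ.isRoot_cyclotomic hn).dvd ?_
    simpa using Polynomial.map_dvd (algebraMap ℚ ℂ) hdvd
  exact hk (hζ.dvd_of_pow_eq_one k (by simpa [sub_eq_zero] using hroot))

variable {p m : ℕ} [Fact p.Prime]

theorem isRoot_cyclotomic_prime_pow_of_isUnit {x : R} (hx : x ^ p ^ (m + 1) = 1)
    (hu : IsUnit (x ^ p ^ m - 1)) : (cyclotomic (p ^ (m + 1)) R).IsRoot x := by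
  have h := congrArg (eval x) (cyclotomic_prime_pow_mul_X_pow_sub_one R p m)
  rw [eval_mul, eval_sub, eval_sub, eval_pow, eval_pow, eval_X, eval_one, hx, sub_self] at h
  exact hu.mul_left_eq_zero.mp h

theorem isRoot_cyclotomic_prime_pow_pow_of_coprime {ζ : R} (hζ : ζ ^ p ^ (m + 1) = 1)
    (hζu : ∀ k, ¬ p ^ (m + 1) ∣ k → IsUnit (ζ ^ k - 1)) {v : ℕ} (hv : v.Coprime p) :
    (cyclotomic (p ^ (m + 1)) R).IsRoot (ζ ^ v) := by
  have hp : p.Prime := Fact.out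
  refine isRoot_cyclotomic_prime_pow_of_isUnit
    (by rw [← pow_mul, mul_comm, pow_mul, hζ, one_pow]) ?_
  rw [← pow_mul]
  refine hζu _ ?_
  rw [pow_succ', Nat.mul_dvd_mul_iff_right (pow_pos hp.pos m)]
  exact (Nat.Prime.coprime_iff_not_dvd hp).mp hv.symm

end Polynomial

namespace AdjoinRoot

variable {R : Type*} [CommRing R]

noncomputable def algEquivPiOfIsRoot {ι : Type*} [Fintype ι] {f : R[X]} {r : ι → R}
    (hf : f.Monic) (hdeg : f.natDegree ≤ Fintype.card ι) (hroot : ∀ i, f.IsRoot (r i))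
    (hr : Pairwise fun i j => IsUnit (r i - r j)) : AdjoinRoot f ≃ₐ[R] (ι → R) :=
  have hspan : Ideal.span {f} = ⨅ i, Ideal.span {X - C (r i)} := by
    rw [Ideal.iInf_span_singleton fun i j hij => isCoprime_X_sub_C_of_isUnit_sub (hr hij),
      ← hf.eq_prod_X_sub_C_of_isRoot hdeg hroot hr]
  (Ideal.quotientEquivAlgOfEq R hspan).trans <|
    (Ideal.quotientInfAlgEquivPiQuotient _ fun i j hij =>
      (Ideal.isCoprime_span_singleton_iff _ _).mpr
        (isCoprime_X_sub_C_of_isUnit_sub (hr hij))).trans <|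
    AlgEquiv.piCongrRight fun i => quotientSpanXSubCAlgEquiv (r i)

theorem root_cyclotomic_pow_eq_one (n : ℕ) : root (cyclotomic n R) ^ n = 1 := by
  have h : mk (cyclotomic n R) (X ^ n - 1) = 0 :=
    mk_eq_zero.mpr (cyclotomic.dvd_X_pow_sub_one n R)
  rwa [map_sub, map_pow, mk_X, map_one, sub_eq_zero] at h

theorem isUnit_root_cyclotomic_pow_sub_one [Algebra ℚ R] {n k : ℕ} (hn : 0 < n)
    (hk : ¬ n ∣ k) : IsUnit (root (cyclotomic n R) ^ k - 1) := by
  obtain ⟨a, b, hab⟩ := (cyclotomic.irreducible_rat hn).coprime_iff_not_dvd.mpr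
    (cyclotomic_rat_not_dvd_X_pow_sub_one hn hk)
  have hcyc : aeval (root (cyclotomic n R)) (cyclotomic n ℚ) = 0 := by
    rw [← aeval_map_algebraMap R, map_cyclotomic, aeval_eq, mk_self]
  apply_fun aeval (root (cyclotomic n R)) at hab
  rw [map_add, map_mul, map_mul, hcyc, mul_zero, zero_add, map_one, map_sub, map_pow, aeval_X,
    map_one] at hab
  exact IsUnit.of_mul_eq_one_right _ hab

noncomputable def cyclotomicPrimePowAlgEquivPi {p m : ℕ} [Fact p.Prime] {ζ : R}
    (hζ : ζ ^ p ^ (m + 1) = 1) (hζu : ∀ k, ¬ p ^ (m + 1) ∣ k → IsUnit (ζ ^ k - 1)) :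
    AdjoinRoot (cyclotomic (p ^ (m + 1)) R) ≃ₐ[R] ((ZMod (p ^ (m + 1)))ˣ → R) :=
  have : NeZero (p ^ (m + 1)) := ⟨(pow_pos (Fact.out : p.Prime).pos _).ne'⟩
  algEquivPiOfIsRoot (cyclotomic.monic _ R)
    (by rw [ZMod.card_units_eq_totient]; exact natDegree_cyclotomic_le)
    (fun u => isRoot_cyclotomic_prime_pow_pow_of_coprime hζ hζu <|
      (Nat.coprime_pow_right_iff m.succ_pos _ _).mp (ZMod.val_coe_unit_coprime u))
    fun u v huv => isUnit_pow_sub_pow_of_not_modEq (NeZero.ne _) hζ hζu fun h => huv <|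
      Units.ext <| by
        rwa [← ZMod.natCast_eq_natCast_iff, ZMod.natCast_zmod_val, ZMod.natCast_zmod_val] at h

end AdjoinRoot

/-- with A = F[x]/⟨Φ_{p^c}⟩ and B = A[y]/⟨Φ_{p^{c'}}(y)⟩,
there is an A-algebra isomorphism B ≃ A^{φ(p^{c'})}. -/
theorem adjoinRoot_cyclotomic_equiv_pi
    (F : Type*) [Field F] [CharZero F] (p : ℕ) (hp : p.Prime)
    (c c' : ℕ) (hc' : 1 ≤ c') (hcc : c' ≤ c) :
    Nonempty
      (AdjoinRoot ((cyclotomic (p ^ c') F).map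
          (algebraMap F (AdjoinRoot (cyclotomic (p ^ c) F))))
        ≃ₐ[AdjoinRoot (cyclotomic (p ^ c) F)]
          (Fin (p ^ c').totient → AdjoinRoot (cyclotomic (p ^ c) F))) := by
  have := Fact.mk hp
  obtain ⟨m, rfl⟩ : ∃ m, c' = m + 1 := ⟨c' - 1, by omega⟩
  have : NeZero (p ^ (m + 1)) := ⟨(pow_pos hp.pos _).ne'⟩
  set μ := AdjoinRoot.root (cyclotomic (p ^ c) F)
  have hsplit : p ^ c = p ^ (c - (m + 1)) * p ^ (m + 1) := by rw [← pow_add]; congr 1; omega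
  have hν : (μ ^ p ^ (c - (m + 1))) ^ p ^ (m + 1) = 1 := by
    rw [← pow_mul, ← hsplit, AdjoinRoot.root_cyclotomic_pow_eq_one]
  have hνu (k : ℕ) (hk : ¬ p ^ (m + 1) ∣ k) : IsUnit ((μ ^ p ^ (c - (m + 1))) ^ k - 1) := by
    rw [← pow_mul]
    refine AdjoinRoot.isUnit_root_cyclotomic_pow_sub_one (pow_pos hp.pos c) ?_
    rwa [hsplit, Nat.mul_dvd_mul_iff_left (pow_pos hp.pos _)]
  rw [map_cyclotomic]
  exact ⟨(AdjoinRoot.cyclotomicPrimePowAlgEquivPi hν hνu).trans <| AlgEquiv.piCongrLeft' _ _ <|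
    Fintype.equivFinOfCardEq (ZMod.card_units_eq_totient _)⟩
end
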